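/- (Proposition B.1′, early-period identification from two cohorts.) Suppose two cohorts a ∈ {1, 2}, each on its own probability space, satisfy Assumption 4 with parameter k and the same sequence μ_t; write covᵃ and Varᵃ for the covariance and variance in cohort a and wᵃ_t := μ_t·θᵃ_t + εᵃ_t. Fix integers t and t' with t' ≥ t + k, and assume Var¹(θ_{t−1}) ≠ Var²(θ_{t−1}), Var¹(θ_t − θ_{t−1}) = Var²(θ_t − θ_{t−1}), μ_{t−1} ≠ 0, and μ_{t'} ≠ 0. Then cov¹(w_{t−1}, w_{t'}) − cov²(w_{t−1}, w_{t'}) ≠ 0 and ( cov¹(w_t, w_{t'}) − cov²(w_t, w_{t'}) ) / ( cov¹(w_{t−1}, w_{t'}) − cov²(w_{t−1}, w_{t'}) ) = μ_t / μ_{t−1}. -/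

import Mathlib

open MeasureTheory ProbabilityTheory

/-- Covariance of two real-valued random variables under measure `P`. -/
noncomputable def cov {Ω : Type*} [MeasurableSpace Ω] (P : Measure Ω) (X Y : Ω → ℝ) : ℝ :=
  ∫ ω, (X ω - ∫ a, X a ∂P) * (Y ω - ∫ a, Y a ∂P) ∂P

/-- Variance of a real-valued random variable under measure `P`. -/
noncomputable def Var {Ω : Type*} [MeasurableSpace Ω] (P : Measure Ω) (X : Ω → ℝ) : ℝ :=
  cov P X X

/-!
Under Assumption 4 the skill process has uncorrelated increments, so `cov(θ_u, θ_s) = Var(θ_s)`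
for `s ≤ u`, and at lags of at least `k` the shocks drop out of the wage covariances:
`cov(w_s, w_u) = μ_s μ_u Var(θ_s)`. Differencing across cohorts at `s = t - 1` and `s = t`
leaves `μ_{t-1} μ_{t'} (V¹ - V²)` and `μ_t μ_{t'} (V¹ - V²)` with `Vᵃ = Varᵃ(θ_{t-1})`, because
`Var(θ_t) = Var(θ_t - θ_{t-1}) + Var(θ_{t-1})` and the growth variances agree.
-/

section Assumption4

variable {Ω : Type*} [MeasurableSpace Ω] {P : Measure Ω}

lemma cov_eq_covariance (X Y : Ω → ℝ) : cov P X Y = cov[X, Y; P] := rfl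

structure Assumption4 (P : Measure Ω) (k : ℕ) (θ ε : ℤ → Ω → ℝ) : Prop where
  cov_growth_past : ∀ t t' : ℤ, 1 ≤ t - t' → cov P (fun ω => θ t ω - θ (t - 1) ω) (θ t') = 0
  cov_skill_shock : ∀ t t' : ℤ, cov P (θ t) (ε t') = 0
  cov_shock_of_le_abs_sub : ∀ t t' : ℤ, (k : ℤ) ≤ |t - t'| → cov P (ε t) (ε t') = 0

variable [IsFiniteMeasure P] {θ : ℤ → Ω → ℝ} (hθ : ∀ t, MemLp (θ t) 2 P)
  (hgrowth : ∀ t t' : ℤ, 1 ≤ t - t' → cov P (fun ω => θ t ω - θ (t - 1) ω) (θ t') = 0)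
include hθ hgrowth

lemma cov_skill_eq_var_of_le {s u : ℤ} (hsu : s ≤ u) : cov P (θ u) (θ s) = Var P (θ s) := by
  induction u, hsu using Int.leInduction with
  | base => rfl
  | succ u hsu ih =>
    have hzero := hgrowth (u + 1) s (by omega)
    rw [add_sub_cancel_right, cov_eq_covariance,
      covariance_fun_sub_left (hθ _) (hθ _) (hθ _), sub_eq_zero] at hzero
    rwa [cov_eq_covariance, hzero]

lemma var_skill_eq_var_growth_add (t : ℤ) :
    Var P (θ t) = Var P (fun ω => θ t ω - θ (t - 1) ω) + Var P (θ (t - 1)) := by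
  set D : Ω → ℝ := fun ω => θ t ω - θ (t - 1) ω
  have hD : MemLp D 2 P := (hθ t).sub (hθ (t - 1))
  have hsplit : θ t = D + θ (t - 1) := by ext ω; simp [D]
  have hcross : cov[D, θ (t - 1); P] = 0 := hgrowth t (t - 1) (by omega)
  have hpast : cov[θ (t - 1), θ t; P] = Var P (θ (t - 1)) := by
    rw [covariance_comm]; exact cov_skill_eq_var_of_le hθ hgrowth (by omega)
  calc Var P (θ t) = cov[D, θ t; P] + cov[θ (t - 1), θ t; P] := by
        rw [Var, cov_eq_covariance, ← covariance_add_left hD (hθ _) (hθ t), ← hsplit]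
    _ = cov[D, D; P] + cov[D, θ (t - 1); P] + Var P (θ (t - 1)) := by
        rw [← covariance_add_right hD hD (hθ _), ← hsplit, hpast]
    _ = Var P D + Var P (θ (t - 1)) := by rw [hcross, add_zero]; rfl

omit hθ hgrowth

lemma cov_wage_eq_of_add_le {k : ℕ} {θ ε : ℤ → Ω → ℝ} (hA : Assumption4 P k θ ε)
    (hθ : ∀ t, MemLp (θ t) 2 P) (hε : ∀ t, MemLp (ε t) 2 P) {μ : ℤ → ℝ} {w : ℤ → Ω → ℝ}
    (hw : ∀ t ω, w t ω = μ t * θ t ω + ε t ω) {s u : ℤ} (hsu : s + k ≤ u) :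
    cov P (w s) (w u) = μ s * μ u * Var P (θ s) := by
  have hskill : cov[θ s, θ u; P] = Var P (θ s) := by
    rw [covariance_comm]; exact cov_skill_eq_var_of_le hθ hA.cov_growth_past (by omega)
  have hshock_skill : cov[ε s, θ u; P] = 0 := by
    rw [covariance_comm]; exact hA.cov_skill_shock u s
  have hshock : cov[ε s, ε u; P] = 0 :=
    hA.cov_shock_of_le_abs_sub s u (by rw [abs_sub_comm, abs_of_nonneg] <;> omega)
  rw [funext (hw s), funext (hw u)]
  change cov[(fun ω => μ s * θ s ω) + ε s, (fun ω => μ u * θ u ω) + ε u; P] = _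
  rw [covariance_add_left ((hθ s).const_mul _) (hε s) (((hθ u).const_mul _).add (hε u)),
    covariance_add_right ((hθ s).const_mul _) ((hθ u).const_mul _) (hε u),
    covariance_add_right (hε s) ((hθ u).const_mul _) (hε u),
    covariance_const_mul_left, covariance_const_mul_left, covariance_const_mul_right,
    covariance_const_mul_right, hskill, hshock_skill, hshock,
    ← cov_eq_covariance, hA.cov_skill_shock]
  ring

end Assumption4

theorem two_cohort_early_identification_general
    {Ω₁ Ω₂ : Type*} [MeasurableSpace Ω₁] [MeasurableSpace Ω₂]
    (P₁ : Measure Ω₁) (P₂ : Measure Ω₂)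
    [IsProbabilityMeasure P₁] [IsProbabilityMeasure P₂]
    (μ : ℤ → ℝ) (k : ℕ)
    (θ₁ ε₁ : ℤ → Ω₁ → ℝ) (w₁ : ℤ → Ω₁ → ℝ)
    (θ₂ ε₂ : ℤ → Ω₂ → ℝ) (w₂ : ℤ → Ω₂ → ℝ)
    (hθ₁ : ∀ t, MemLp (θ₁ t) 2 P₁) (hε₁ : ∀ t, MemLp (ε₁ t) 2 P₁)
    (hθ₂ : ∀ t, MemLp (θ₂ t) 2 P₂) (hε₂ : ∀ t, MemLp (ε₂ t) 2 P₂)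
    (hw₁ : ∀ t ω, w₁ t ω = μ t * θ₁ t ω + ε₁ t ω)
    (hw₂ : ∀ t ω, w₂ t ω = μ t * θ₂ t ω + ε₂ t ω)
    (A4i₁ : ∀ t t' : ℤ, 1 ≤ t - t' →
      cov P₁ (fun ω => θ₁ t ω - θ₁ (t - 1) ω) (θ₁ t') = 0)
    (A4ii₁ : ∀ t t' : ℤ, cov P₁ (θ₁ t) (ε₁ t') = 0)
    (A4iii₁ : ∀ t t' : ℤ, (k : ℤ) ≤ |t - t'| → cov P₁ (ε₁ t) (ε₁ t') = 0)
    (A4i₂ : ∀ t t' : ℤ, 1 ≤ t - t' →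
      cov P₂ (fun ω => θ₂ t ω - θ₂ (t - 1) ω) (θ₂ t') = 0)
    (A4ii₂ : ∀ t t' : ℤ, cov P₂ (θ₂ t) (ε₂ t') = 0)
    (A4iii₂ : ∀ t t' : ℤ, (k : ℤ) ≤ |t - t'| → cov P₂ (ε₂ t) (ε₂ t') = 0)
    (t t' : ℤ) (ht : t + k ≤ t')
    (hvar_ne : Var P₁ (θ₁ (t - 1)) ≠ Var P₂ (θ₂ (t - 1)))
    (hvar_eq : Var P₁ (fun ω => θ₁ t ω - θ₁ (t - 1) ω) =
      Var P₂ (fun ω => θ₂ t ω - θ₂ (t - 1) ω))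
    (hμ₁ : μ (t - 1) ≠ 0) (hμ₂ : μ t' ≠ 0) :
    cov P₁ (w₁ (t - 1)) (w₁ t') - cov P₂ (w₂ (t - 1)) (w₂ t') ≠ 0 ∧
      (cov P₁ (w₁ t) (w₁ t') - cov P₂ (w₂ t) (w₂ t')) /
          (cov P₁ (w₁ (t - 1)) (w₁ t') - cov P₂ (w₂ (t - 1)) (w₂ t')) =
        μ t / μ (t - 1) := by
  have hA₁ : Assumption4 P₁ k θ₁ ε₁ := ⟨A4i₁, A4ii₁, A4iii₁⟩
  have hA₂ : Assumption4 P₂ k θ₂ ε₂ := ⟨A4i₂, A4ii₂, A4iii₂⟩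
  have hΔV : Var P₁ (θ₁ (t - 1)) - Var P₂ (θ₂ (t - 1)) ≠ 0 := sub_ne_zero.mpr hvar_ne
  have hprev : cov P₁ (w₁ (t - 1)) (w₁ t') - cov P₂ (w₂ (t - 1)) (w₂ t') =
      μ (t - 1) * μ t' * (Var P₁ (θ₁ (t - 1)) - Var P₂ (θ₂ (t - 1))) := by
    rw [cov_wage_eq_of_add_le hA₁ hθ₁ hε₁ hw₁ (by omega),
      cov_wage_eq_of_add_le hA₂ hθ₂ hε₂ hw₂ (by omega)]
    ring
  have hcurr : cov P₁ (w₁ t) (w₁ t') - cov P₂ (w₂ t) (w₂ t') =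
      μ t * μ t' * (Var P₁ (θ₁ (t - 1)) - Var P₂ (θ₂ (t - 1))) := by
    rw [cov_wage_eq_of_add_le hA₁ hθ₁ hε₁ hw₁ ht, cov_wage_eq_of_add_le hA₂ hθ₂ hε₂ hw₂ ht,
      var_skill_eq_var_growth_add hθ₁ A4i₁, var_skill_eq_var_growth_add hθ₂ A4i₂, hvar_eq]
    ring
  rw [hprev, hcurr]
  refine ⟨by positivity, ?_⟩
  field_simp

/-- Proposition B.1′ (early-period identification from two cohorts): if two cohorts satisfy
Assumption 4 with the same returns `μ`, the period-`(t−1)` skill variances differ across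
cohorts, and the skill-growth variances agree, then the across-cohort difference of long
autocovariances identifies `μ t / μ (t−1)`. -/
theorem two_cohort_early_identification
    {Ω₁ Ω₂ : Type*} [MeasurableSpace Ω₁] [MeasurableSpace Ω₂]
    (P₁ : Measure Ω₁) (P₂ : Measure Ω₂)
    [IsProbabilityMeasure P₁] [IsProbabilityMeasure P₂]
    (μ : ℤ → ℝ) (k : ℕ) (hk : 1 ≤ k)
    (θ₁ ε₁ : ℤ → Ω₁ → ℝ) (w₁ : ℤ → Ω₁ → ℝ)
    (θ₂ ε₂ : ℤ → Ω₂ → ℝ) (w₂ : ℤ → Ω₂ → ℝ)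
    (hθ₁ : ∀ t, MemLp (θ₁ t) 2 P₁) (hε₁ : ∀ t, MemLp (ε₁ t) 2 P₁)
    (hθ₂ : ∀ t, MemLp (θ₂ t) 2 P₂) (hε₂ : ∀ t, MemLp (ε₂ t) 2 P₂)
    (hw₁ : ∀ t ω, w₁ t ω = μ t * θ₁ t ω + ε₁ t ω)
    (hw₂ : ∀ t ω, w₂ t ω = μ t * θ₂ t ω + ε₂ t ω)
    (A4i₁ : ∀ t t' : ℤ, 1 ≤ t - t' →
      cov P₁ (fun ω => θ₁ t ω - θ₁ (t - 1) ω) (θ₁ t') = 0)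
    (A4ii₁ : ∀ t t' : ℤ, cov P₁ (θ₁ t) (ε₁ t') = 0)
    (A4iii₁ : ∀ t t' : ℤ, (k : ℤ) ≤ |t - t'| → cov P₁ (ε₁ t) (ε₁ t') = 0)
    (A4i₂ : ∀ t t' : ℤ, 1 ≤ t - t' →
      cov P₂ (fun ω => θ₂ t ω - θ₂ (t - 1) ω) (θ₂ t') = 0)
    (A4ii₂ : ∀ t t' : ℤ, cov P₂ (θ₂ t) (ε₂ t') = 0)
    (A4iii₂ : ∀ t t' : ℤ, (k : ℤ) ≤ |t - t'| → cov P₂ (ε₂ t) (ε₂ t') = 0)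
    (t t' : ℤ) (ht : t + k ≤ t')
    (hvar_ne : Var P₁ (θ₁ (t - 1)) ≠ Var P₂ (θ₂ (t - 1)))
    (hvar_eq : Var P₁ (fun ω => θ₁ t ω - θ₁ (t - 1) ω) =
      Var P₂ (fun ω => θ₂ t ω - θ₂ (t - 1) ω))
    (hμ₁ : μ (t - 1) ≠ 0) (hμ₂ : μ t' ≠ 0) :
    cov P₁ (w₁ (t - 1)) (w₁ t') - cov P₂ (w₂ (t - 1)) (w₂ t') ≠ 0 ∧
      (cov P₁ (w₁ t) (w₁ t') - cov P₂ (w₂ t) (w₂ t')) /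
          (cov P₁ (w₁ (t - 1)) (w₁ t') - cov P₂ (w₂ (t - 1)) (w₂ t')) =
        μ t / μ (t - 1) :=
  two_cohort_early_identification_general P₁ P₂ μ k θ₁ ε₁ w₁ θ₂ ε₂ w₂ hθ₁ hε₁ hθ₂ hε₂ hw₁ hw₂ A4i₁
    A4ii₁ A4iii₁ A4i₂ A4ii₂ A4iii₂ t t' ht hvar_ne hvar_eq hμ₁ hμ₂
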